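/- The partial derivative of the DEL penalty R(z) = ∑_i p_i(z) B_i(z) with respect to the logit z_k equals p_k(B_k - R(z) + σ(z_k) - y_k), where p = S(z) is the softmax, σ is the sigmoid, y is a one-hot label, and B_i(z) = -y_i log σ(z_i) - (1-y_i) log(1 - σ(z_i)). -/

import Mathlib

open Finset

noncomputable def sigm11 (t : ℝ) : ℝ := 1 / (1 + Real.exp (-t))

noncomputable def smax11 (z : Fin 10 → ℝ) (i : Fin 10) : ℝ :=
  Real.exp (z i) / ∑ j, Real.exp (z j)

noncomputable def bce11 (y : Fin 10 → ℝ) (z : Fin 10 → ℝ) (i : Fin 10) : ℝ :=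
  -(y i) * Real.log (sigm11 (z i)) - (1 - y i) * Real.log (1 - sigm11 (z i))

noncomputable def delR (y : Fin 10 → ℝ) (z : Fin 10 → ℝ) : ℝ :=
  ∑ i, smax11 z i * bce11 y z i

/-!
Moving only the logit `z_k`, the softmax weights satisfy `p_i' = p_i (δ_ik - p_k)` and, since the
binary cross-entropy `B_i` depends on `z_i` alone with `B_i' = σ(z_i) - y_i`, we get
`B_i' = δ_ik (σ(z_k) - y_k)`. The product rule then gives
`R' = ∑_i p_i (δ_ik - p_k) B_i + p_k (σ(z_k) - y_k) = p_k (B_k - R + σ(z_k) - y_k)`.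
-/

open Real

noncomputable def binCrossEntropy (a t : ℝ) : ℝ :=
  -a * log (sigm11 t) - (1 - a) * log (1 - sigm11 t)

lemma binCrossEntropy_eq_log_one_add_exp_neg (a t : ℝ) :
    binCrossEntropy a t = log (1 + exp (-t)) + (1 - a) * t := by
  have hpos : (0 : ℝ) < 1 + exp (-t) := by positivity
  have hlog_sigm : log (sigm11 t) = -log (1 + exp (-t)) := by
    rw [sigm11, log_div one_ne_zero hpos.ne', log_one, zero_sub]
  have hone_sub : 1 - sigm11 t = exp (-t) / (1 + exp (-t)) := by
    rw [sigm11]; field_simp; ring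
  rw [binCrossEntropy, hlog_sigm, hone_sub, log_div (exp_ne_zero _) hpos.ne', log_exp]
  ring

lemma hasDerivAt_binCrossEntropy (a t : ℝ) :
    HasDerivAt (binCrossEntropy a) (sigm11 t - a) t := by
  have hpos : (0 : ℝ) < 1 + exp (-t) := by positivity
  have hsoftplus : HasDerivAt (fun s => log (1 + exp (-s))) (-exp (-t) / (1 + exp (-t))) t := by
    simpa using (((hasDerivAt_neg t).exp).const_add 1).log hpos.ne'
  have hlin : HasDerivAt (fun s => (1 - a) * s) (1 - a) t := by
    simpa using (hasDerivAt_id t).const_mul (1 - a)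
  have hform : binCrossEntropy a = fun s => log (1 + exp (-s)) + (1 - a) * s :=
    funext (binCrossEntropy_eq_log_one_add_exp_neg a)
  rw [hform]
  refine (hsoftplus.add hlin).congr_deriv ?_
  rw [sigm11]; field_simp; ring

section Softmax

variable {ι : Type*} [DecidableEq ι]

lemma hasDerivAt_update_apply (z : ι → ℝ) (k i : ι) :
    HasDerivAt (fun t => Function.update z k t i) ((Pi.single k 1 : ι → ℝ) i) (z k) :=
  hasDerivAt_pi.1 (hasDerivAt_update z k (z k)) i

variable [Fintype ι]

noncomputable def softmax (z : ι → ℝ) (i : ι) : ℝ :=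
  exp (z i) / ∑ j, exp (z j)

lemma hasDerivAt_softmax_update (z : ι → ℝ) (k i : ι) :
    HasDerivAt (fun t => softmax (Function.update z k t) i)
      (softmax z i * ((Pi.single k 1 : ι → ℝ) i - softmax z k)) (z k) := by
  have hexp : ∀ j, HasDerivAt (fun t => exp (Function.update z k t j))
      (exp (z j) * (Pi.single k 1 : ι → ℝ) j) (z k) := fun j => by
    have h := (hasDerivAt_update_apply z k j).exp
    rwa [Function.update_eq_self] at h
  have hsum : HasDerivAt (fun t => ∑ j, exp (Function.update z k t j)) (exp (z k)) (z k) := by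
    refine (HasDerivAt.fun_sum fun j (_ : j ∈ univ) => hexp j).congr_deriv ?_
    simp [Pi.single_apply]
  have hS : (∑ j, exp (Function.update z k (z k) j)) ≠ 0 := by
    rw [Function.update_eq_self]
    exact (sum_pos (fun j _ => exp_pos (z j)) ⟨k, mem_univ k⟩).ne'
  refine ((hexp i).fun_div hsum hS).congr_deriv ?_
  rw [Function.update_eq_self] at hS ⊢
  simp only [softmax]
  field_simp

lemma sum_softmax_deriv_mul_add (p B c : ι → ℝ) (k : ι) :
    ∑ i, (p i * ((Pi.single k 1 : ι → ℝ) i - p k) * B i + p i * (c i * (Pi.single k 1 : ι → ℝ) i))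
      = p k * (B k - ∑ i, p i * B i + c k) := by
  simp only [Pi.single_apply, mul_sub, sub_mul, mul_ite, mul_one, mul_zero, ite_mul, zero_mul,
    sum_add_distrib, sum_sub_distrib, sum_ite_eq', mem_univ, if_true]
  have hweighted : ∑ i, p i * p k * B i = p k * ∑ i, p i * B i := by
    rw [mul_sum]; exact sum_congr rfl fun i _ => by ring
  rw [hweighted]
  ring

lemma hasDerivAt_sum_softmax_mul_binCrossEntropy (y z : ι → ℝ) (k : ι) :
    HasDerivAt
      (fun t => ∑ i, softmax (Function.update z k t) i * binCrossEntropy (y i) (Function.update z k t i))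
      (softmax z k * (binCrossEntropy (y k) (z k) - ∑ i, softmax z i * binCrossEntropy (y i) (z i)
        + (sigm11 (z k) - y k))) (z k) := by
  have hB : ∀ i, HasDerivAt (fun t => binCrossEntropy (y i) (Function.update z k t i))
      ((sigm11 (z i) - y i) * (Pi.single k 1 : ι → ℝ) i) (z k) := fun i =>
    (hasDerivAt_binCrossEntropy (y i) (z i)).comp_of_eq (z k)
      (hasDerivAt_update_apply z k i) (by simp)
  have h := HasDerivAt.fun_sum fun i (_ : i ∈ univ) => (hasDerivAt_softmax_update z k i).fun_mul (hB i)
  rwa [Function.update_eq_self, sum_softmax_deriv_mul_add] at h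

end Softmax

theorem stmt_11_general (y : Fin 10 → ℝ) (z : Fin 10 → ℝ) (k : Fin 10) :
    HasDerivAt (fun t => delR y (Function.update z k t))
      (smax11 z k * (bce11 y z k - delR y z + sigm11 (z k) - y k)) (z k) := by
  rw [add_sub_assoc]
  exact hasDerivAt_sum_softmax_mul_binCrossEntropy y z k

/-- The partial derivative of the DEL penalty `R(z) = ∑ᵢ pᵢ(z) Bᵢ(z)` with respect
to the logit `z_k` equals `p_k (B_k - R(z) + σ(z_k) - y_k)`. -/
theorem stmt_11 (g : Fin 10) (y : Fin 10 → ℝ)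
    (hy : y = fun i => if i = g then 1 else 0) (z : Fin 10 → ℝ) (k : Fin 10) :
    HasDerivAt (fun t => delR y (Function.update z k t))
      (smax11 z k * (bce11 y z k - delR y z + sigm11 (z k) - y k)) (z k) :=
  stmt_11_general y z k
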